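/- arXiv:1801.06361 — 2 statements merged into one kernel-verified Lean document; each statement's English description precedes it below -/
import Mathlib

section
/- Let U be a Hilbert space, Q = Q₁ × Q₂ a product of Hilbert spaces with Q₁ ≠ {0}, and b(u,q) = b₁(u,q₁) + b₂(u,q₂) a continuous bilinear form on U × Q whose induced operator B : U → Q' is surjective. Let V₂ := ker(B₂) where B₂ : U → Q₂' is induced by b₂, and V := ker(B). Then the restriction B₁|_{V₂} : V₂ → Q₁' of the operator induced by b₁ is surjective; equivalently, there exists β > 0 such that inf_{q₁∈Q₁} sup_{u∈V₂} b₁(u,q₁)/(‖u‖_U ‖q₁‖_{Q₁}) ≥ β. -/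
open RealInnerProductSpace

noncomputable section

/-! A preimage of `(f, 0)` under `B = (B₁, B₂)` lies in `ker B₂` and is mapped to `f` by `B₁`,
so `B₁|_{V₂}` is onto `Q₁'`. The inf-sup constant is the reciprocal of the open mapping
constant of `B₁|_{V₂}`: if `B₁ v = g` for a norming functional `g` of `q` with `‖v‖ ≤ C`, then
`‖q‖ = b₁(v, q) ≤ C ‖b₁(·, q)‖`. -/

theorem ContinuousLinearMap.surjective_comp_subtypeL_ker_of_surjective_prod
    {R M N P : Type*} [Semiring R] [TopologicalSpace M] [AddCommMonoid M] [Module R M]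
    [TopologicalSpace N] [AddCommMonoid N] [Module R N]
    [TopologicalSpace P] [AddCommMonoid P] [Module R P]
    (f : M →L[R] N) (g : M →L[R] P) (h : Function.Surjective fun x => (f x, g x)) :
    Function.Surjective ⇑(f.comp (LinearMap.ker (g : M →ₗ[R] P)).subtypeL) := by
  intro y
  obtain ⟨x, hx⟩ := h (y, 0)
  exact ⟨⟨x, congrArg Prod.snd hx⟩, congrArg Prod.fst hx⟩

theorem ContinuousLinearMap.exists_pos_mul_norm_le_norm_flip_of_surjective
    {𝕜 E F : Type*} [RCLike 𝕜] [NormedAddCommGroup E] [NormedSpace 𝕜 E] [CompleteSpace E]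
    [NormedAddCommGroup F] [NormedSpace 𝕜 F]
    (T : E →L[𝕜] F →L[𝕜] 𝕜) (hT : Function.Surjective T) :
    ∃ β > (0 : ℝ), ∀ q : F, β * ‖q‖ ≤ ‖T.flip q‖ := by
  obtain ⟨C, hC, hpre⟩ := T.exists_preimage_norm_le hT
  refine ⟨C⁻¹, inv_pos.mpr hC, fun q => ?_⟩
  obtain ⟨g, hg, hgq⟩ := exists_dual_vector'' 𝕜 q
  obtain ⟨v, rfl, hv⟩ := hpre g
  have hvC : ‖v‖ ≤ C := hv.trans (mul_le_of_le_one_right hC.le hg)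
  have hq : ‖q‖ ≤ ‖T.flip q‖ * C :=
    calc ‖q‖ = ‖T.flip q v‖ := by simp [hgq]
      _ ≤ ‖T.flip q‖ * ‖v‖ := (T.flip q).le_opNorm v
      _ ≤ ‖T.flip q‖ * C := by gcongr
  rw [inv_mul_le_iff₀ hC]
  linarith

theorem statement0_general
    {U Q1 Q2 : Type*}
    [NormedAddCommGroup U] [InnerProductSpace ℝ U] [CompleteSpace U]
    [NormedAddCommGroup Q1] [InnerProductSpace ℝ Q1]
    [NormedAddCommGroup Q2] [InnerProductSpace ℝ Q2]
    (b1 : U →L[ℝ] Q1 →L[ℝ] ℝ) (b2 : U →L[ℝ] Q2 →L[ℝ] ℝ)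
    (hBsurj : Function.Surjective
      (fun u : U => ((b1 u, b2 u) : (Q1 →L[ℝ] ℝ) × (Q2 →L[ℝ] ℝ)))) :
    Function.Surjective ⇑(b1.comp (LinearMap.ker (b2 : U →ₗ[ℝ] Q2 →L[ℝ] ℝ)).subtypeL) ∧
      ∃ β > (0 : ℝ), ∀ q1 : Q1,
        β * ‖q1‖ ≤ ‖(b1.comp (LinearMap.ker (b2 : U →ₗ[ℝ] Q2 →L[ℝ] ℝ)).subtypeL).flip q1‖ := by
  have hsurj := b1.surjective_comp_subtypeL_ker_of_surjective_prod b2 hBsurj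
  have : CompleteSpace (LinearMap.ker (b2 : U →ₗ[ℝ] Q2 →L[ℝ] ℝ)) :=
    b2.isClosed_ker.completeSpace_coe
  exact ⟨hsurj, ContinuousLinearMap.exists_pos_mul_norm_le_norm_flip_of_surjective _ hsurj⟩

/-- `U, Q₁, Q₂` are real Hilbert spaces, `Q = Q₁ × Q₂` with `Q₁ ≠ {0}`;
`b₁, b₂` are continuous bilinear forms inducing operators `B₁ : U → Q₁'`, `B₂ : U → Q₂'`;
the combined operator `B = (B₁, B₂) : U → Q₁' × Q₂'` is surjective.  With
`V₂ := ker B₂`, the restriction `B₁|_{V₂} : V₂ → Q₁'` is surjective; equivalently there is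
`β > 0` such that the inf-sup condition
`inf_{q₁∈Q₁} sup_{u∈V₂} b₁(u,q₁)/(‖u‖ ‖q₁‖) ≥ β` holds (the `sup` being expressed as the
dual norm of the functional `v ↦ b₁(v, q₁)` on `V₂`). -/
theorem statement0
    {U Q1 Q2 : Type*}
    [NormedAddCommGroup U] [InnerProductSpace ℝ U] [CompleteSpace U]
    [NormedAddCommGroup Q1] [InnerProductSpace ℝ Q1] [CompleteSpace Q1]
    [NormedAddCommGroup Q2] [InnerProductSpace ℝ Q2] [CompleteSpace Q2]
    [Nontrivial Q1]
    (b1 : U →L[ℝ] Q1 →L[ℝ] ℝ) (b2 : U →L[ℝ] Q2 →L[ℝ] ℝ)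
    (hBsurj : Function.Surjective
      (fun u : U => ((b1 u, b2 u) : (Q1 →L[ℝ] ℝ) × (Q2 →L[ℝ] ℝ)))) :
    Function.Surjective ⇑(b1.comp (LinearMap.ker (b2 : U →ₗ[ℝ] Q2 →L[ℝ] ℝ)).subtypeL) ∧
      ∃ β > (0 : ℝ), ∀ q1 : Q1,
        β * ‖q1‖ ≤ ‖(b1.comp (LinearMap.ker (b2 : U →ₗ[ℝ] Q2 →L[ℝ] ℝ)).subtypeL).flip q1‖ :=
  statement0_general b1 b2 hBsurj
end
end

section
/- Let Ĥ be any separable Hilbert space and w ∈ H^{1,b}(I;Ĥ). The unique W ∈ P^b(I;Ĥ) satisfying D_Ĥ(W,X) = D_Ĥ(w,X) for all X ∈ P^b(I;Ĥ) is W = I_q w, the intervalwise projection of w. -/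
/-!
Testing the equation with a broken polynomial `X` supported on a single interval `Iₙ`, and using
that `W` already interpolates `w` at `tₙ₋₁` (induction on `n`), the jump terms collapse and one is
left with `∫ φ W' + φ(tₙ₋₁) (Wⁿ⁻¹₊ − wⁿ⁻¹₊) = ∫ φ w'` on `Iₙ` for every scalar polynomial `φ` of
degree `< q`. Integrating by parts on both sides (for `w` through Fubini, since `w` is only the
primitive of an integrable function) turns this into `φ(tₙ) (W − w)(tₙ) = ∫ φ' (W − w)`:
`φ = 1` gives the nodal condition and `φ = s ^ (i + 1)` the moment conditions.
-/

open MeasureTheory RealInnerProductSpace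

noncomputable section

/-- Evaluation of the polynomial with coefficients `c` (degree `< q`) at `s`. -/
def pEval {E : Type*} [AddCommGroup E] [Module ℝ E] (q : ℕ) (c : ℕ → E) (s : ℝ) : E :=
  ∑ i ∈ Finset.range q, s ^ i • c i

/-- Derivative of the polynomial with coefficients `c` at `s`. -/
def pDeriv {E : Type*} [AddCommGroup E] [Module ℝ E] (q : ℕ) (c : ℕ → E) (s : ℝ) : E :=
  ∑ i ∈ Finset.range q, ((i : ℝ) * s ^ (i - 1)) • c i

/-- `c` is the family of coefficients of the DG projection `I_q φ`: on each subinterval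
`Iₙ = (tₙ₋₁, tₙ]` the value at the right endpoint coincides with that of `φ` and the moments
against polynomials of degree `≤ q − 2` vanish. -/
def IsProjCoeff {E : Type*} [NormedAddCommGroup E] [NormedSpace ℝ E]
    (q N : ℕ) (tp : ℕ → ℝ) (φ : ℝ → E) (c : ℕ → ℕ → E) : Prop :=
  ∀ n, 1 ≤ n → n ≤ N →
    pEval q (c n) (tp n) = φ (tp n) ∧
    ∀ i, i + 1 < q →
      (∫ s in Set.Ioc (tp (n - 1)) (tp n), s ^ i • (pEval q (c n) s - φ s)) = 0


section Polynomial

variable {E : Type*} [NormedAddCommGroup E] [NormedSpace ℝ E]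

@[simp]
lemma pEval_zero (q : ℕ) (s : ℝ) : pEval q (0 : ℕ → E) s = 0 := by simp [pEval]

lemma pEval_smul_const (q : ℕ) (α : ℕ → ℝ) (e : E) (s : ℝ) :
    pEval q (fun j => α j • e) s = pEval q α s • e := by
  simp [pEval, Finset.sum_smul, smul_smul]

lemma pEval_single (q : ℕ) {k : ℕ} (hk : k < q) (r s : ℝ) :
    pEval q (Pi.single k r) s = s ^ k * r := by
  rw [pEval, Finset.sum_eq_single_of_mem k (Finset.mem_range.mpr hk)] <;> simp_all

lemma pDeriv_single (q : ℕ) {k : ℕ} (hk : k < q) (r s : ℝ) :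
    pDeriv q (Pi.single k r) s = k * s ^ (k - 1) * r := by
  rw [pDeriv, Finset.sum_eq_single_of_mem k (Finset.mem_range.mpr hk)] <;> simp_all

lemma continuous_pEval (q : ℕ) (c : ℕ → E) : Continuous (pEval q c) := by
  unfold pEval; fun_prop

lemma continuous_pDeriv (q : ℕ) (c : ℕ → E) : Continuous (pDeriv q c) := by
  unfold pDeriv; fun_prop

lemma hasDerivAt_pEval (q : ℕ) (c : ℕ → E) (s : ℝ) :
    HasDerivAt (pEval q c) (pDeriv q c s) s := by
  unfold pEval pDeriv
  exact HasDerivAt.fun_sum fun i _ => by simpa using (hasDerivAt_pow i s).smul_const (c i)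

end Polynomial

section Primitive

variable {E : Type*} [NormedAddCommGroup E] [NormedSpace ℝ E] [CompleteSpace E]
  {a b : ℝ} {φ φ' : ℝ → ℝ}

lemma integral_Ioc_eq_sub_of_hasDerivAt {f f' : ℝ → E} (hab : a ≤ b)
    (hf : ∀ s, HasDerivAt f (f' s) s) (hf' : Continuous f') :
    ∫ s in Set.Ioc a b, f' s = f b - f a := by
  rw [← intervalIntegral.integral_of_le hab]
  exact intervalIntegral.integral_eq_sub_of_hasDerivAt (fun s _ => hf s)
    (hf'.intervalIntegrable a b)

lemma integral_smul_integral_Ioc {f : ℝ → E} (hf : IntegrableOn f (Set.Ioc a b))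
    (hφ : ∀ s, HasDerivAt φ (φ' s) s) (hφ' : Continuous φ') :
    ∫ s in Set.Ioc a b, φ' s • ∫ r in Set.Ioc a s, f r =
      ∫ r in Set.Ioc a b, (φ b - φ r) • f r := by
  set μ := volume.restrict (Set.Ioc a b)
  have : IsFiniteMeasure μ := isFiniteMeasure_restrict.2 measure_Ioc_lt_top.ne
  set T := {p : ℝ × ℝ | p.2 ≤ p.1}
  have hT : MeasurableSet T := measurableSet_le measurable_snd measurable_fst
  obtain ⟨C, hC⟩ := (isCompact_Icc (a := a) (b := b)).exists_bound_of_continuousOn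
    hφ'.continuousOn
  have hint : Integrable (T.indicator fun p => φ' p.1 • f p.2) (μ.prod μ) := by
    refine ((integrable_const C).mul_prod hf.norm).mono'
      ((hφ'.aestronglyMeasurable.comp_fst.smul hf.aestronglyMeasurable.comp_snd).indicator hT) ?_
    rw [Measure.prod_restrict]
    filter_upwards [ae_restrict_mem (measurableSet_Ioc.prod measurableSet_Ioc)] with p hp
    refine (norm_indicator_le_norm_self _ _).trans ?_
    rw [norm_smul]
    exact mul_le_mul_of_nonneg_right (hC _ (Set.Ioc_subset_Icc_self hp.1)) (norm_nonneg _)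
  have hsection : ∀ s r, T.indicator (fun p => φ' p.1 • f p.2) (s, r) =
      (Set.Iic s).indicator (fun r => φ' s • f r) r := fun s r => by
    simp [T, Set.indicator_apply]
  have hsection' : ∀ s r, T.indicator (fun p => φ' p.1 • f p.2) (s, r) =
      (Set.Ici r).indicator φ' s • f r := fun s r => by
    by_cases h : r ≤ s <;> simp [T, h]
  calc ∫ s in Set.Ioc a b, φ' s • ∫ r in Set.Ioc a s, f r
      = ∫ s, ∫ r, T.indicator (fun p => φ' p.1 • f p.2) (s, r) ∂μ ∂μ := by
        refine setIntegral_congr_fun measurableSet_Ioc fun s hs => ?_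
        simp only [hsection, integral_indicator measurableSet_Iic, μ,
          Measure.restrict_restrict measurableSet_Iic, Set.Iic_inter_Ioc_of_le hs.2, integral_smul]
    _ = ∫ r, ∫ s, T.indicator (fun p => φ' p.1 • f p.2) (s, r) ∂μ ∂μ :=
        integral_integral_swap hint
    _ = ∫ r in Set.Ioc a b, (φ b - φ r) • f r := by
        refine setIntegral_congr_fun measurableSet_Ioc fun r hr => ?_
        have hIcc : Set.Ici r ∩ Set.Ioc a b = Set.Icc r b := by
          ext s; simp only [Set.mem_inter_iff, Set.mem_Ici, Set.mem_Ioc, Set.mem_Icc]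
          exact ⟨fun h => ⟨h.1, h.2.2⟩, fun h => ⟨h.1, hr.1.trans_le h.1, h.2⟩⟩
        simp only [hsection', integral_smul_const, integral_indicator measurableSet_Ici, μ,
          Measure.restrict_restrict measurableSet_Ici, hIcc, integral_Icc_eq_integral_Ioc,
          integral_Ioc_eq_sub_of_hasDerivAt hr.2 hφ hφ']

lemma integral_smul_eq_of_eq_add_integral {f w : ℝ → E} {w₀ : E} (hab : a < b)
    (hf : IntegrableOn f (Set.Ioc a b)) (hw : IntegrableOn w (Set.Ioc a b))
    (hw_eq : ∀ s ∈ Set.Ioc a b, w s = w₀ + ∫ r in Set.Ioc a s, f r)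
    (hφ : ∀ s, HasDerivAt φ (φ' s) s) (hφ' : Continuous φ') :
    ∫ s in Set.Ioc a b, φ s • f s = φ b • w b - φ a • w₀ - ∫ s in Set.Ioc a b, φ' s • w s := by
  have hφc : Continuous φ := continuous_iff_continuousAt.2 fun s => (hφ s).continuousAt
  have hconst : IntegrableOn (fun s => φ' s • w₀) (Set.Ioc a b) :=
    (hφ'.smul continuous_const).integrableOn_Ioc
  have hparts : (∫ s in Set.Ioc a b, φ' s • w s) - ∫ s in Set.Ioc a b, φ' s • w₀ =
      ∫ r in Set.Ioc a b, (φ b - φ r) • f r := by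
    rw [← integral_sub (hw.continuousOn_smul_of_subset hφ'.continuousOn isCompact_Icc
        measurableSet_Ioc Set.Ioc_subset_Icc_self) hconst,
      ← integral_smul_integral_Ioc hf hφ hφ']
    refine setIntegral_congr_fun measurableSet_Ioc fun s hs => ?_
    simp only [hw_eq s hs, smul_add, add_sub_cancel_left]
  rw [integral_smul_const, integral_Ioc_eq_sub_of_hasDerivAt hab.le hφ hφ'] at hparts
  simp only [sub_smul] at hparts
  rw [integral_sub (f := fun r => φ b • f r) (hf.smul (φ b))
      (hf.continuousOn_smul_of_subset hφc.continuousOn isCompact_Icc measurableSet_Ioc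
        Set.Ioc_subset_Icc_self),
    integral_smul] at hparts
  rw [hw_eq b ⟨hab, le_rfl⟩]
  linear_combination (norm := module) hparts

end Primitive

section Interval

variable {E : Type*} [NormedAddCommGroup E] [NormedSpace ℝ E] [CompleteSpace E]
  {a b : ℝ} {w dw : ℝ → E} {w₀ : E}

lemma smul_sub_eq_integral_deriv_smul_sub {W W' : ℝ → E} {φ φ' : ℝ → ℝ} (hab : a < b)
    (hW : ∀ s, HasDerivAt W (W' s) s) (hW' : Continuous W')
    (hdw : IntegrableOn dw (Set.Ioc a b)) (hw : IntegrableOn w (Set.Ioc a b))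
    (hw_eq : ∀ s ∈ Set.Ioc a b, w s = w₀ + ∫ r in Set.Ioc a s, dw r)
    (hφ : ∀ s, HasDerivAt φ (φ' s) s) (hφ' : Continuous φ')
    (hweak : (∫ s in Set.Ioc a b, φ s • W' s) + φ a • (W a - w₀) =
      ∫ s in Set.Ioc a b, φ s • dw s) :
    φ b • (W b - w b) = ∫ s in Set.Ioc a b, φ' s • (W s - w s) := by
  have hWc : Continuous W := continuous_iff_continuousAt.2 fun s => (hW s).continuousAt
  have hW_parts := integral_smul_eq_of_eq_add_integral hab hW'.integrableOn_Ioc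
    hWc.integrableOn_Ioc
    (fun s hs => by rw [integral_Ioc_eq_sub_of_hasDerivAt hs.1.le hW hW', add_sub_cancel]) hφ hφ'
  have hw_parts := integral_smul_eq_of_eq_add_integral hab hdw hw hw_eq hφ hφ'
  simp only [smul_sub]
  rw [integral_sub (f := fun s => φ' s • W s) (hφ'.smul hWc).integrableOn_Ioc
    (hw.continuousOn_smul_of_subset hφ'.continuousOn isCompact_Icc measurableSet_Ioc
      Set.Ioc_subset_Icc_self)]
  rw [hW_parts, hw_parts] at hweak
  linear_combination (norm := module) hweak

lemma pEval_eq_and_moments_eq_zero_of_weak_eq {q : ℕ} (hq : 0 < q) {c : ℕ → E} (hab : a < b)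
    (hdw : IntegrableOn dw (Set.Ioc a b)) (hw : IntegrableOn w (Set.Ioc a b))
    (hw_eq : ∀ s ∈ Set.Ioc a b, w s = w₀ + ∫ r in Set.Ioc a s, dw r)
    (hweak : ∀ α : ℕ → ℝ, (∫ s in Set.Ioc a b, pEval q α s • pDeriv q c s) +
      pEval q α a • (pEval q c a - w₀) = ∫ s in Set.Ioc a b, pEval q α s • dw s) :
    pEval q c b = w b ∧
      ∀ i, i + 1 < q → ∫ s in Set.Ioc a b, s ^ i • (pEval q c s - w s) = 0 := by
  have key (α : ℕ → ℝ) :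
      pEval q α b • (pEval q c b - w b) =
        ∫ s in Set.Ioc a b, pDeriv q α s • (pEval q c s - w s) :=
    smul_sub_eq_integral_deriv_smul_sub hab (hasDerivAt_pEval q c) (continuous_pDeriv q c) hdw hw
      hw_eq (hasDerivAt_pEval q α) (continuous_pDeriv q α) (hweak α)
  have hb : pEval q c b = w b := by
    simpa [pEval_single q hq, pDeriv_single q hq, sub_eq_zero] using key (Pi.single 0 1)
  refine ⟨hb, fun i hi => ?_⟩
  have hmoment := key (Pi.single (i + 1) 1)
  simp only [pEval_single q hi, pDeriv_single q hi, hb, sub_self, smul_zero, mul_one,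
    add_tsub_cancel_right, mul_smul, integral_smul] at hmoment
  exact (smul_eq_zero.1 hmoment.symm).resolve_left (by positivity)

end Interval

lemma Ioc_pred_subset_Ioc_of_lt_succ {α : Type*} [Preorder α] {t : ℕ → α} {N n : ℕ}
    (ht : ∀ n < N, t n < t (n + 1)) (hnN : n ≤ N) :
    Set.Ioc (t (n - 1)) (t n) ⊆ Set.Ioc (t 0) (t N) := by
  have ht_mono : MonotoneOn t (Set.Iic N) :=
    (strictMonoOn_Iic_of_lt_succ (by simpa using ht)).monotoneOn
  exact Set.Ioc_subset_Ioc (ht_mono (by simp) (by simp; omega) (by omega))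
    (ht_mono (by simpa using hnN) (by simp) hnN)

section BrokenPolynomial

variable {E : Type*} [NormedAddCommGroup E] [InnerProductSpace ℝ E] {q N n : ℕ} {tp : ℕ → ℝ}

/-- `D_Ĥ(Y, X)` for the broken polynomial `X` with coefficients `cX`, where `Y` enters through its
intervalwise derivatives `dY n` on `Iₙ`, its jumps `jump n = [Y]ⁿ` and its value `Y₀ = Y⁰₊`. -/
def dgForm (q N : ℕ) (tp : ℕ → ℝ) (dY : ℕ → ℝ → E) (jump : ℕ → E) (Y₀ : E)
    (cX : ℕ → ℕ → E) : ℝ :=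
  (∑ n ∈ Finset.Icc 1 N, ∫ s in Set.Ioc (tp (n - 1)) (tp n), ⟪dY n s, pEval q (cX n) s⟫)
    + (∑ n ∈ Finset.Icc 1 (N - 1), ⟪jump n, pEval q (cX (n + 1)) (tp n)⟫)
    + ⟪Y₀, pEval q (cX 1) (tp 0)⟫

lemma dgForm_single (hn : 1 ≤ n) (hnN : n ≤ N) (dY : ℕ → ℝ → E) (jump : ℕ → E) (Y₀ : E)
    (x : ℕ → E) :
    dgForm q N tp dY jump Y₀ (Pi.single n x) =
      (∫ s in Set.Ioc (tp (n - 1)) (tp n), ⟪dY n s, pEval q x s⟫) +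
        ⟪if n = 1 then Y₀ else jump (n - 1), pEval q x (tp (n - 1))⟫ := by
  have hI : ∀ m ∈ Finset.Icc 1 N, m ≠ n → ∫ s in Set.Ioc (tp (m - 1)) (tp m),
      ⟪dY m s, pEval q (Pi.single (M := fun _ => ℕ → E) n x m) s⟫ = 0 :=
    fun m _ hm => by simp [hm]
  rw [dgForm, Finset.sum_eq_single_of_mem n (Finset.mem_Icc.2 ⟨hn, hnN⟩) hI, add_assoc]
  congr 1
  · simp
  · by_cases h1 : n = 1
    · subst h1
      rw [Finset.sum_eq_zero fun m hm => by
        rw [Pi.single_eq_of_ne (by have := (Finset.mem_Icc.1 hm).1; omega)]; simp]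
      simp
    · have hmem : n - 1 ∈ Finset.Icc 1 (N - 1) := Finset.mem_Icc.2 ⟨by omega, by omega⟩
      rw [Finset.sum_eq_single_of_mem (n - 1) hmem fun m _ hm => by
        rw [Pi.single_eq_of_ne (by omega)]; simp]
      simp [Nat.sub_add_cancel hn, h1]

variable [CompleteSpace E]

lemma weak_eq_of_dgForm_eq {cW : ℕ → ℕ → E} {w dw : ℝ → E} {wp : ℕ → E} (hn : 1 ≤ n)
    (hnN : n ≤ N) (hdw : IntegrableOn dw (Set.Ioc (tp (n - 1)) (tp n)))
    (hprev : n = 1 ∨ pEval q (cW (n - 1)) (tp (n - 1)) = w (tp (n - 1)))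
    (hD : ∀ cX, dgForm q N tp (fun n => pDeriv q (cW n))
        (fun n => pEval q (cW (n + 1)) (tp n) - pEval q (cW n) (tp n)) (pEval q (cW 1) (tp 0)) cX =
      dgForm q N tp (fun _ => dw) (fun n => wp n - w (tp n)) (wp 0) cX)
    (α : ℕ → ℝ) :
    (∫ s in Set.Ioc (tp (n - 1)) (tp n), pEval q α s • pDeriv q (cW n) s) +
        pEval q α (tp (n - 1)) • (pEval q (cW n) (tp (n - 1)) - wp (n - 1)) =
      ∫ s in Set.Ioc (tp (n - 1)) (tp n), pEval q α s • dw s := by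
  refine ext_inner_left ℝ fun e => ?_
  have h := hD (Pi.single n fun j => α j • e)
  simp only [dgForm_single hn hnN, pEval_smul_const, real_inner_smul_right,
    real_inner_comm e] at h
  rw [inner_add_right, ← integral_inner (f := fun s => pEval q α s • pDeriv q (cW n) s)
      ((continuous_pEval q α).smul (continuous_pDeriv q (cW n))).integrableOn_Ioc,
    ← integral_inner (f := fun s => pEval q α s • dw s)
      (hdw.continuousOn_smul_of_subset (continuous_pEval q α).continuousOn isCompact_Icc
        measurableSet_Ioc Set.Ioc_subset_Icc_self)]
  simp only [real_inner_smul_right, inner_sub_right]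
  by_cases h1 : n = 1
  · subst h1
    simp only [↓reduceIte, Nat.sub_self] at h ⊢
    linarith
  · simp only [if_neg h1, Nat.sub_add_cancel hn, hprev.resolve_left h1, inner_sub_right] at h
    linarith

end BrokenPolynomial

theorem statement4_general
    {E : Type*} [NormedAddCommGroup E] [InnerProductSpace ℝ E] [CompleteSpace E]
    (q N : ℕ) (hq : 1 ≤ q)
    (tp : ℕ → ℝ) (htp : ∀ n < N, tp n < tp (n + 1))
    (w dw : ℝ → E) (wp : ℕ → E)
    (hw : ∀ n, 1 ≤ n → n ≤ N → ∀ s ∈ Set.Ioc (tp (n - 1)) (tp n),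
        w s = wp (n - 1) + ∫ r in (tp (n - 1))..s, dw r)
    (hwi : MemLp w 2 (volume.restrict (Set.Ioc (tp 0) (tp N))))
    (hdwi : MemLp dw 2 (volume.restrict (Set.Ioc (tp 0) (tp N))))
    (cW : ℕ → ℕ → E)
    (hW : ∀ cX : ℕ → ℕ → E,
      (∑ n ∈ Finset.Icc 1 N, ∫ s in Set.Ioc (tp (n - 1)) (tp n),
          ⟪pDeriv q (cW n) s, pEval q (cX n) s⟫)
        + (∑ n ∈ Finset.Icc 1 (N - 1),
            ⟪pEval q (cW (n + 1)) (tp n) - pEval q (cW n) (tp n),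
              pEval q (cX (n + 1)) (tp n)⟫)
        + ⟪pEval q (cW 1) (tp 0), pEval q (cX 1) (tp 0)⟫
      = (∑ n ∈ Finset.Icc 1 N, ∫ s in Set.Ioc (tp (n - 1)) (tp n),
          ⟪dw s, pEval q (cX n) s⟫)
        + (∑ n ∈ Finset.Icc 1 (N - 1),
            ⟪wp n - w (tp n), pEval q (cX (n + 1)) (tp n)⟫)
        + ⟪wp 0, pEval q (cX 1) (tp 0)⟫) :
    IsProjCoeff q N tp w cW := by
  have hlt (n : ℕ) (hn : 1 ≤ n) (hnN : n ≤ N) : tp (n - 1) < tp n := by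
    simpa [Nat.sub_add_cancel hn] using htp (n - 1) (by omega)
  have hsub (n : ℕ) (hnN : n ≤ N) := Ioc_pred_subset_Ioc_of_lt_succ htp hnN
  have hdwI (n : ℕ) (hnN : n ≤ N) : IntegrableOn dw (Set.Ioc (tp (n - 1)) (tp n)) :=
    IntegrableOn.mono_set (hdwi.integrable one_le_two) (hsub n hnN)
  have hwI (n : ℕ) (hnN : n ≤ N) : IntegrableOn w (Set.Ioc (tp (n - 1)) (tp n)) :=
    IntegrableOn.mono_set (hwi.integrable one_le_two) (hsub n hnN)
  have hinterval (n : ℕ) (hn : 1 ≤ n) (hnN : n ≤ N)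
      (hprev : n = 1 ∨ pEval q (cW (n - 1)) (tp (n - 1)) = w (tp (n - 1))) :
      pEval q (cW n) (tp n) = w (tp n) ∧ ∀ i, i + 1 < q →
        ∫ s in Set.Ioc (tp (n - 1)) (tp n), s ^ i • (pEval q (cW n) s - w s) = 0 :=
    pEval_eq_and_moments_eq_zero_of_weak_eq hq (hlt n hn hnN) (hdwI n hnN) (hwI n hnN)
      (fun s hs => by rw [hw n hn hnN s hs, intervalIntegral.integral_of_le hs.1.le])
      (weak_eq_of_dgForm_eq hn hnN (hdwI n hnN) hprev hW)
  have hnode (n : ℕ) (hn : 1 ≤ n) : n ≤ N → pEval q (cW n) (tp n) = w (tp n) := by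
    induction n, hn using Nat.le_induction with
    | base => exact fun hN => (hinterval 1 le_rfl hN (Or.inl rfl)).1
    | succ n hn ih => exact fun hN => (hinterval (n + 1) (by omega) hN (Or.inr (ih (by omega)))).1
  intro n hn hnN
  exact hinterval n hn hnN ((eq_or_ne n 1).imp_right fun h1 => hnode (n - 1) (by omega) (by omega))

/-- Let `Ĥ = E` be a separable Hilbert space and `w ∈ H^{1,b}(I;Ĥ)` a broken `H¹` function
(represented by `w`, its intervalwise derivative `dw` and its right-limit node values `wp`).
If the broken polynomial `W ∈ P^b(I;Ĥ)` with coefficients `cW` satisfies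
`D_Ĥ(W, X) = D_Ĥ(w, X)` for all broken polynomials `X ∈ P^b(I;Ĥ)`, then `W = I_q w`. -/
theorem statement4
    {E : Type*} [NormedAddCommGroup E] [InnerProductSpace ℝ E] [CompleteSpace E]
    [TopologicalSpace.SeparableSpace E]
    (q N : ℕ) (hq : 1 ≤ q) (hN : 1 ≤ N)
    (tp : ℕ → ℝ) (htp : ∀ n < N, tp n < tp (n + 1))
    (w dw : ℝ → E) (wp : ℕ → E)
    (hw : ∀ n, 1 ≤ n → n ≤ N → ∀ s ∈ Set.Ioc (tp (n - 1)) (tp n),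
        w s = wp (n - 1) + ∫ r in (tp (n - 1))..s, dw r)
    (hwi : MemLp w 2 (volume.restrict (Set.Ioc (tp 0) (tp N))))
    (hdwi : MemLp dw 2 (volume.restrict (Set.Ioc (tp 0) (tp N))))
    (cW : ℕ → ℕ → E)
    (hW : ∀ cX : ℕ → ℕ → E,
      (∑ n ∈ Finset.Icc 1 N, ∫ s in Set.Ioc (tp (n - 1)) (tp n),
          ⟪pDeriv q (cW n) s, pEval q (cX n) s⟫)
        + (∑ n ∈ Finset.Icc 1 (N - 1),
            ⟪pEval q (cW (n + 1)) (tp n) - pEval q (cW n) (tp n),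
              pEval q (cX (n + 1)) (tp n)⟫)
        + ⟪pEval q (cW 1) (tp 0), pEval q (cX 1) (tp 0)⟫
      = (∑ n ∈ Finset.Icc 1 N, ∫ s in Set.Ioc (tp (n - 1)) (tp n),
          ⟪dw s, pEval q (cX n) s⟫)
        + (∑ n ∈ Finset.Icc 1 (N - 1),
            ⟪wp n - w (tp n), pEval q (cX (n + 1)) (tp n)⟫)
        + ⟪wp 0, pEval q (cX 1) (tp 0)⟫) :
    IsProjCoeff q N tp w cW :=
  statement4_general q N hq tp htp w dw wp hw hwi hdwi cW hW
end
end
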